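/- Let η₀ ∈ (0,1), F₀ ∈ (0, log((1+η₀)/(1−η₀))), a ∈ [−F₀, F₀], and e ∈ [0,1] with |2e − 1| > η₀. Set s = 1 if 2e − 1 > 0 and s = −1 if 2e − 1 < 0, and let D = ((1−η₀)/2)·φ′(−F₀) − ((1+η₀)/2)·φ′(F₀), where φ′(t) = −1/(1+e^t) is the derivative of the logistic loss. Then 0 ≤ |a − F₀·s|·D ≤ |a − F₀·s|·D + (1/(2·(e^(−F₀) + e^(F₀) + 2)))·(a − F₀·s)² ≤ e·(φ(a) − φ(F₀·s)) + (1−e)·(φ(−a) − φ(−F₀·s)) ≤ |a − F₀·s| + F₀². -/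

import Mathlib

open MeasureTheory
open scoped ENNReal NNReal

namespace DNNLogistic

noncomputable section

/-- The unit cube `[0,1]^d` as a subset of `ℝ^d`. -/
def cube (d : ℕ) : Set (Fin d → ℝ) := {x | ∀ i, x i ∈ Set.Icc (0 : ℝ) 1}

/-- The logistic loss `φ(t) = log (1 + e^{-t})`. -/
def logLoss (t : ℝ) : ℝ := Real.log (1 + Real.exp (-t))

/-- `sgn(t) = 1` if `t ≥ 0`, `sgn(t) = -1` otherwise. -/
def rsgn (t : ℝ) : ℝ := if 0 ≤ t then 1 else -1

/-- The Euclidean distance `‖x - z‖₂` on `ℝ^m`. -/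
def eucDist {m : ℕ} (x z : Fin m → ℝ) : ℝ := Real.sqrt (∑ i, (x i - z i) ^ 2)

/-- The logistic risk `R^φ_{η,Q}(f)` of `f` with respect to the conditional probability
function `η` and the marginal distribution `Q` on `[0,1]^d`. -/
def logRisk (d : ℕ) (Q : Measure (Fin d → ℝ)) (η f : (Fin d → ℝ) → ℝ) : ℝ :=
  ∫ x, (η x * logLoss (f x) + (1 - η x) * logLoss (-f x)) ∂Q

/-- The infimum of the logistic risk over all Borel measurable real-valued functions. -/
def infLogRisk (d : ℕ) (Q : Measure (Fin d → ℝ)) (η : (Fin d → ℝ) → ℝ) : ℝ :=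
  sInf {t | ∃ g : (Fin d → ℝ) → ℝ, Measurable g ∧ t = logRisk d Q η g}

/-- The excess logistic risk `E^φ_{η,Q}(f)`. -/
def excessLogRisk (d : ℕ) (Q : Measure (Fin d → ℝ)) (η f : (Fin d → ℝ) → ℝ) : ℝ :=
  logRisk d Q η f - infLogRisk d Q η

/-- The misclassification risk `R_{η,Q}(f)`; note `1{sgn(f x) = -1} = 1{f x < 0}` and
`1{sgn(f x) = 1} = 1{0 ≤ f x}`. -/
def misRisk (d : ℕ) (Q : Measure (Fin d → ℝ)) (η f : (Fin d → ℝ) → ℝ) : ℝ :=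
  ∫ x, (η x * (if f x < 0 then (1 : ℝ) else 0)
      + (1 - η x) * (if 0 ≤ f x then (1 : ℝ) else 0)) ∂Q

/-- The infimum of the misclassification risk over all Borel measurable functions. -/
def infMisRisk (d : ℕ) (Q : Measure (Fin d → ℝ)) (η : (Fin d → ℝ) → ℝ) : ℝ :=
  sInf {t | ∃ g : (Fin d → ℝ) → ℝ, Measurable g ∧ t = misRisk d Q η g}

/-- The excess misclassification error `E_{η,Q}(f)`. -/
def excessMisRisk (d : ℕ) (Q : Measure (Fin d → ℝ)) (η f : (Fin d → ℝ) → ℝ) : ℝ :=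
  misRisk d Q η f - infMisRisk d Q η

/-- The joint distribution `P_{η,Q}` on `ℝ^d × ℝ`: the marginal on the first factor is `Q`,
and the conditional distribution of the label given `x` puts mass `η x` on `1` and mass
`1 - η x` on `-1`.  It satisfies `P_{η,Q}(S) = ∫ (η x • 1_S(x,1) + (1 - η x) • 1_S(x,-1)) dQ`. -/
def PeQ (d : ℕ) (Q : Measure (Fin d → ℝ)) (η : (Fin d → ℝ) → ℝ) :
    Measure ((Fin d → ℝ) × ℝ) :=
  (Q.withDensity fun x => ENNReal.ofReal (η x)).map (fun x => (x, (1 : ℝ)))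
    + (Q.withDensity fun x => ENNReal.ofReal (1 - η x)).map (fun x => (x, (-1 : ℝ)))

/-- The logistic risk `R^φ_P(f)` with respect to a joint distribution `P` on
`[0,1]^d × {-1,1}`. -/
def jointLogRisk (d : ℕ) (P : Measure ((Fin d → ℝ) × ℝ)) (f : (Fin d → ℝ) → ℝ) : ℝ :=
  ∫ z, logLoss (z.2 * f z.1) ∂P

/-- The Lebesgue measure on the cube `[0,1]^d`. -/
def cubeVolume (d : ℕ) : Measure (Fin d → ℝ) := volume.restrict (cube d)

/-- The `n`-fold product measure `P^{⊗n}` on the sample space. -/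
def nSample (d n : ℕ) (P : Measure ((Fin d → ℝ) × ℝ)) :
    Measure (Fin n → (Fin d → ℝ) × ℝ) :=
  Measure.pi fun _ => P

/-- `fhat` is an empirical logistic-risk minimizer over the class `Fcls` from samples of
size `n`: it is jointly Borel measurable, and for every sample
`z ∈ ([0,1]^d × {-1,1})^n` the function `fhat z` belongs to `Fcls` and minimizes the
empirical logistic risk over `Fcls`. -/
def IsERM (d n : ℕ) (Fcls : Set ((Fin d → ℝ) → ℝ))
    (fhat : (Fin n → (Fin d → ℝ) × ℝ) → (Fin d → ℝ) → ℝ) : Prop :=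
  Measurable (fun p : (Fin n → (Fin d → ℝ) × ℝ) × (Fin d → ℝ) => fhat p.1 p.2) ∧
  ∀ z : Fin n → (Fin d → ℝ) × ℝ, (∀ i, z i ∈ (cube d) ×ˢ ({-1, 1} : Set ℝ)) →
    fhat z ∈ Fcls ∧
    ∀ f ∈ Fcls,
      ∑ i, logLoss ((z i).2 * fhat z ((z i).1)) ≤ ∑ i, logLoss ((z i).2 * f ((z i).1))

/-- The successive hidden layers of a fully connected ReLU network:
`u₀ = x` and `u_{k+1} = σ_{v_{k+1}}(W_k u_k)`. -/
def fnnHidden (m : ℕ → ℕ) (W : ∀ k : ℕ, Matrix (Fin (m (k + 1))) (Fin (m k)) ℝ)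
    (v : ∀ k : ℕ, Fin (m k) → ℝ) : (k : ℕ) → (Fin (m 0) → ℝ) → (Fin (m k) → ℝ)
  | 0 => fun x => x
  | (k + 1) => fun x j => max ((W k).mulVec (fnnHidden m W v k x) j - v (k + 1) j) 0

/-- `f ∈ F^FNN_d(G, N, S, B, F)`: `f : ℝ^d → ℝ` is realized by a fully connected ReLU
network `x ↦ W_L σ_{v_L} W_{L-1} ⋯ W_1 σ_{v_1} W_0 x` with depth `L ≤ G`, hidden widths
at most `N`, at most `S` nonzero entries among all weight matrices and bias vectors, all
entries bounded by `B` in absolute value, and `sup_{x ∈ [0,1]^d} |f x| ≤ F`. -/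
def IsFNN (d : ℕ) (G N S B : ℝ) (F : ℝ≥0∞) (f : (Fin d → ℝ) → ℝ) : Prop :=
  ∃ (L : ℕ) (m : ℕ → ℕ) (W : ∀ k : ℕ, Matrix (Fin (m (k + 1))) (Fin (m k)) ℝ)
    (v : ∀ k : ℕ, Fin (m k) → ℝ) (hm0 : m 0 = d) (hmL : m (L + 1) = 1),
    1 ≤ L ∧ (L : ℝ) ≤ G ∧
    (∀ k : ℕ, 1 ≤ k → k ≤ L → (m k : ℝ) ≤ N) ∧
    (((∑ k ∈ Finset.range (L + 1),
          Set.ncard {p : Fin (m (k + 1)) × Fin (m k) | W k p.1 p.2 ≠ 0}) +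
        (∑ k ∈ Finset.Icc 1 L, Set.ncard {j : Fin (m k) | v k j ≠ 0}) : ℝ) ≤ S) ∧
    (∀ k : ℕ, k ≤ L → ∀ i j, |W k i j| ≤ B) ∧
    (∀ k : ℕ, 1 ≤ k → k ≤ L → ∀ j, |v k j| ≤ B) ∧
    (∀ x ∈ cube d, ENNReal.ofReal |f x| ≤ F) ∧
    (∀ x : Fin d → ℝ,
      f x = (W L).mulVec (fnnHidden m W v L fun i => x (Fin.cast hm0 i)) (Fin.cast hmL.symm 0))

/-- The partial derivative (within the cube) of `f` in the `i`-th coordinate direction. -/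
def pderivW (m : ℕ) (i : Fin m) (f : (Fin m → ℝ) → ℝ) : (Fin m → ℝ) → ℝ :=
  fun x => fderivWithin ℝ f (cube m) x (Pi.single i 1)

/-- The iterated partial derivative of `f` along the list of coordinate directions `l`. -/
def derivListW (m : ℕ) : List (Fin m) → ((Fin m → ℝ) → ℝ) → ((Fin m → ℝ) → ℝ)
  | [], f => f
  | (i :: l), f => derivListW m l (pderivW m i f)

/-- Membership in the Hölder ball `B^β_r([0,1]^m)`: with `k = ⌈β⌉ - 1` and
`λ = β - ⌈β⌉ + 1`, `f` has continuous partial derivatives (within the cube) up to order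
`k`, and the maximum of the sup-norms of its derivatives of order at most `k` plus the
maximum of the Hölder-`λ` seminorms of its derivatives of order `k` is at most `r`. -/
def MemHolderBall (m : ℕ) (β r : ℝ) (f : (Fin m → ℝ) → ℝ) : Prop :=
  (∀ l : List (Fin m), l.length < ⌈β⌉₊ - 1 →
    DifferentiableOn ℝ (derivListW m l f) (cube m)) ∧
  (∀ l : List (Fin m), l.length ≤ ⌈β⌉₊ - 1 →
    ContinuousOn (derivListW m l f) (cube m)) ∧
  ∃ A Bc : ℝ, A + Bc ≤ r ∧
    (∀ l : List (Fin m), l.length ≤ ⌈β⌉₊ - 1 → ∀ x ∈ cube m, |derivListW m l f x| ≤ A) ∧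
    (∀ l : List (Fin m), l.length = ⌈β⌉₊ - 1 → ∀ x ∈ cube m, ∀ z ∈ cube m, x ≠ z →
      |derivListW m l f x - derivListW m l f z| ≤ Bc * eucDist x z ^ (β - (⌈β⌉₊ : ℝ) + 1))

/-- `f ∈ G^M_d(dmax)`: on `[0,1]^d`, `f` computes the maximum of at most `dmax` of its
input coordinates. -/
def GM (d dmax : ℕ) (f : (Fin d → ℝ) → ℝ) : Prop :=
  ∃ (I : Finset (Fin d)) (hI : I.Nonempty), I.card ≤ dmax ∧
    ∀ x ∈ cube d, f x = I.sup' hI fun i => x i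

/-- `f ∈ G^H_d(dstar, β, r)`: on `[0,1]^d`, `f` depends on exactly `dstar` of its input
coordinates, through a function in the Hölder ball `B^β_r([0,1]^{dstar})`. -/
def GH (d dstar : ℕ) (β r : ℝ) (f : (Fin d → ℝ) → ℝ) : Prop :=
  ∃ (I : Finset (Fin d)) (hI : I.card = dstar) (g : (Fin dstar → ℝ) → ℝ),
    MemHolderBall dstar β r g ∧
    ∀ x ∈ cube d, f x = g fun j => x ↑(I.orderIsoOfFin hI j)

/-- Iterated composition `h_{n-1} ∘ ⋯ ∘ h_1 ∘ h_0` of a chain of maps with varying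
dimensions `D : ℕ → ℕ`. -/
def depChain (D : ℕ → ℕ) (h : ∀ i : ℕ, (Fin (D i) → ℝ) → (Fin (D (i + 1)) → ℝ)) :
    (n : ℕ) → (Fin (D 0) → ℝ) → (Fin (D n) → ℝ)
  | 0 => fun x => x
  | (n + 1) => fun x => h n (depChain D h n x)

/-- `f ∈ G^CHOM_d(q, K, dmax, dstar, β, r)`: on `[0,1]^d`, `f` is a composition
`h_q ∘ ⋯ ∘ h_0` where `h_0 : [0,1]^d → [0,1]^K`, `h_i : [0,1]^K → [0,1]^K` for
`0 < i < q`, `h_q : [0,1]^{d or K} → ℝ`, and each coordinate function of each `h_i`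
belongs to `G^H(dstar, β, r) ∪ G^M(dmax)`. -/
def GCHOM (q d dmax dstar K : ℕ) (β r : ℝ) (f : (Fin d → ℝ) → ℝ) : Prop :=
  ∃ (D : ℕ → ℕ) (h : ∀ i : ℕ, (Fin (D i) → ℝ) → (Fin (D (i + 1)) → ℝ))
    (hD0 : D 0 = d) (hDq : D (q + 1) = 1),
    (∀ i : ℕ, 1 ≤ i → i ≤ q → D i = K) ∧
    (∀ i : ℕ, i ≤ q → ∀ j : Fin (D (i + 1)),
      GH (D i) dstar β r (fun x => h i x j) ∨ GM (D i) dmax (fun x => h i x j)) ∧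
    (∀ i : ℕ, i < q → ∀ x ∈ cube (D i), h i x ∈ cube (D (i + 1))) ∧
    (∀ x ∈ cube d,
      f x = depChain D h (q + 1) (fun i => x (Fin.cast hD0 i)) (Fin.cast hDq.symm 0))

/-- `f ∈ G^CH_d(q, K, dstar, β, r)`: as `G^CHOM`, but every coordinate function belongs
to `G^H(dstar, β, r)`. -/
def GCH (q d dstar K : ℕ) (β r : ℝ) (f : (Fin d → ℝ) → ℝ) : Prop :=
  ∃ (D : ℕ → ℕ) (h : ∀ i : ℕ, (Fin (D i) → ℝ) → (Fin (D (i + 1)) → ℝ))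
    (hD0 : D 0 = d) (hDq : D (q + 1) = 1),
    (∀ i : ℕ, 1 ≤ i → i ≤ q → D i = K) ∧
    (∀ i : ℕ, i ≤ q → ∀ j : Fin (D (i + 1)), GH (D i) dstar β r (fun x => h i x j)) ∧
    (∀ i : ℕ, i < q → ∀ x ∈ cube (D i), h i x ∈ cube (D (i + 1))) ∧
    (∀ x ∈ cube d,
      f x = depChain D h (q + 1) (fun i => x (Fin.cast hD0 i)) (Fin.cast hDq.symm 0))

/-- The sup-norm over the cube of the (componentwise) difference of two vector-valued
functions. -/
def supDiffVec (m k : ℕ) (g g' : (Fin m → ℝ) → (Fin k → ℝ)) : ℝ :=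
  sSup {t | ∃ x ∈ cube m, ∃ j : Fin k, t = |g x j - g' x j|}

/-- The binary entropy function `H`. -/
def entH (t : ℝ) : ℝ :=
  if t = 0 ∨ t = 1 then 0 else t * Real.log (1 / t) + (1 - t) * Real.log (1 / (1 - t))

/-- `sup { 1/(2(2 + e^t + e^{-t})) : min u v ≤ t ≤ max u v }`. -/
def wSup (u v : ℝ) : ℝ :=
  sSup {s | ∃ t ∈ Set.Icc (min u v) (max u v), s = 1 / (2 * (2 + Real.exp t + Real.exp (-t)))}

/-- The function `J` of Statement 19. -/
def Jfun (x y : ℝ) : ℝ :=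
  (x + y) * Real.log (2 / (x + y)) + (2 - x - y) * Real.log (2 / (2 - x - y))
    - (x * Real.log (1 / x) + (1 - x) * Real.log (1 / (1 - x))
        + y * Real.log (1 / y) + (1 - y) * Real.log (1 / (1 - y)))

/-- The grid `G_{Q,d}` of points of `[0,1]^d` whose coordinates are odd multiples of
`1/(2Q)`. -/
def oddGrid (d Qn : ℕ) : Set (Fin d → ℝ) :=
  {a | a ∈ cube d ∧ ∀ i, ∃ k : ℤ, Odd k ∧ a i = (k : ℝ) / (2 * (Qn : ℝ))}

/-!
Write `G(t) = p φ(t) + (1 - p) φ(-t)`, so that the bounded quantity is `G(a) - G(F₀ s)`.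
Replacing `(p, a)` by `(1 - p, -a)` reduces to `s = 1`, i.e. `p > (1 + η₀) / 2`.
Since `φ''` is even, `G'' = φ''`, which on `[-F₀, F₀]` is at least
`1 / (e^{-F₀} + e^{F₀} + 2)`; moreover `-G'(F₀) = D + p - (1 + η₀) / 2 ≥ D`, and `D ≥ 0`
is equivalent to `F₀ ≤ log ((1 + η₀) / (1 - η₀))`. The second-order Taylor bound at `F₀`
gives the lower estimate; the upper one holds because `φ` is `1`-Lipschitz.
-/

open Real Set

lemma hasDerivAt_logLoss (t : ℝ) : HasDerivAt logLoss (-(1 / (1 + exp t))) t := by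
  have h : HasDerivAt (fun t => 1 + exp (-t)) (-exp (-t)) t := by
    simpa using ((hasDerivAt_neg t).exp).const_add 1
  refine (h.log (by positivity)).congr_deriv ?_
  rw [exp_neg]
  field_simp
  ring

lemma lipschitzWith_logLoss : LipschitzWith 1 logLoss := by
  refine lipschitzWith_of_nnnorm_deriv_le (fun t => (hasDerivAt_logLoss t).differentiableAt)
    fun t => ?_
  rw [(hasDerivAt_logLoss t).deriv, ← NNReal.coe_le_coe, coe_nnnorm, norm_neg,
    Real.norm_of_nonneg (by positivity), NNReal.coe_one, div_le_one (by positivity)]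
  linarith [exp_pos t]

def condLogRisk (p t : ℝ) : ℝ := p * logLoss t + (1 - p) * logLoss (-t)

def condLogRiskDeriv (p t : ℝ) : ℝ := p * -(1 / (1 + exp t)) + (1 - p) * (1 / (1 + exp (-t)))

lemma condLogRisk_one_sub_neg (p t : ℝ) : condLogRisk (1 - p) (-t) = condLogRisk p t := by
  rw [condLogRisk, condLogRisk, neg_neg]
  ring

lemma hasDerivAt_condLogRisk (p t : ℝ) :
    HasDerivAt (condLogRisk p) (condLogRiskDeriv p t) t := by
  have h := (hasDerivAt_logLoss (-t)).comp t (hasDerivAt_neg t)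
  refine (((hasDerivAt_logLoss t).const_mul p).add (h.const_mul (1 - p))).congr_deriv ?_
  simp only [condLogRiskDeriv]
  ring

lemma hasDerivAt_condLogRiskDeriv (p t : ℝ) :
    HasDerivAt (condLogRiskDeriv p) (1 / (exp (-t) + exp t + 2)) t := by
  have h₁ : HasDerivAt (fun t => 1 + exp t) (exp t) t := (hasDerivAt_exp t).const_add 1
  have h₂ : HasDerivAt (fun t => 1 + exp (-t)) (-exp (-t)) t := by
    simpa using ((hasDerivAt_neg t).exp).const_add 1
  refine ((((hasDerivAt_const t 1).div h₁ (by positivity)).neg.const_mul p).add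
    (((hasDerivAt_const t 1).div h₂ (by positivity)).const_mul (1 - p))).congr_deriv ?_
  rw [exp_neg]
  field_simp
  ring

lemma one_div_exp_neg_add_exp_add_two_le {t u : ℝ} (h : |t| ≤ |u|) :
    1 / (exp (-u) + exp u + 2) ≤ 1 / (exp (-t) + exp t + 2) := by
  have h' := cosh_le_cosh.2 h
  rw [cosh_eq, cosh_eq] at h'
  exact one_div_le_one_div_of_le (by positivity) (by linarith)

lemma add_deriv_mul_add_sq_le_of_le_deriv2 {f f' f'' : ℝ → ℝ} {c x y : ℝ} (hxy : x ≤ y)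
    (hf : ∀ t ∈ Icc x y, HasDerivAt f (f' t) t) (hf' : ∀ t ∈ Icc x y, HasDerivAt f' (f'' t) t)
    (hc : ∀ t ∈ Ioo x y, c ≤ f'' t) :
    f y + f' y * (x - y) + c / 2 * (x - y) ^ 2 ≤ f x := by
  have hmono : MonotoneOn (fun t => f' t - c * t) (Icc x y) := by
    have hd : ∀ t ∈ Icc x y, HasDerivAt (fun t => f' t - c * t) (f'' t - c) t := fun t ht =>
      ((hf' t ht).sub ((hasDerivAt_id' t).const_mul c)).congr_deriv (by ring)
    refine monotoneOn_of_hasDerivWithinAt_nonneg (convex_Icc x y)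
      (fun t ht => (hd t ht).continuousAt.continuousWithinAt)
      (fun t ht => (hd t (interior_subset ht)).hasDerivWithinAt) fun t ht => ?_
    rw [interior_Icc] at ht
    linarith [hc t ht]
  have hanti : AntitoneOn (fun t => f t - f' y * t - c / 2 * (t - y) ^ 2) (Icc x y) := by
    have hd : ∀ t ∈ Icc x y, HasDerivAt (fun t => f t - f' y * t - c / 2 * (t - y) ^ 2)
        (f' t - f' y - c * (t - y)) t := fun t ht => by
      refine (((hf t ht).sub ((hasDerivAt_id t).const_mul (f' y))).sub
        ((((hasDerivAt_id t).sub_const y).pow 2).const_mul (c / 2))).congr_deriv ?_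
      simp only [id_eq]
      ring
    refine antitoneOn_of_hasDerivWithinAt_nonpos (convex_Icc x y)
      (fun t ht => (hd t ht).continuousAt.continuousWithinAt)
      (fun t ht => (hd t (interior_subset ht)).hasDerivWithinAt) fun t ht => ?_
    rw [interior_Icc] at ht
    have := hmono (Ioo_subset_Icc_self ht) (right_mem_Icc.2 hxy) ht.2.le
    simp only at this
    linarith
  have := hanti (left_mem_Icc.2 hxy) (right_mem_Icc.2 hxy) hxy
  simp only [sub_self] at this
  linarith

lemma condLogRisk_sub_le {p : ℝ} (hp : p ∈ Icc (0 : ℝ) 1) (a b : ℝ) :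
    condLogRisk p a - condLogRisk p b ≤ |a - b| := by
  have hφ (x y : ℝ) : logLoss x - logLoss y ≤ |x - y| := by
    have := lipschitzWith_logLoss.dist_le_mul x y
    rw [NNReal.coe_one, one_mul, Real.dist_eq, Real.dist_eq] at this
    exact (le_abs_self _).trans this
  have h₁ := mul_le_mul_of_nonneg_left (hφ a b) hp.1
  have h₂ := mul_le_mul_of_nonneg_left (hφ (-a) (-b)) (sub_nonneg.2 hp.2)
  rw [show -a - -b = -(a - b) by ring, abs_neg] at h₂
  rw [condLogRisk, condLogRisk]
  linarith

lemma le_condLogRisk_sub (p : ℝ) {a F : ℝ} (ha : a ∈ Icc (-F) F) :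
    (F - a) * -condLogRiskDeriv p F + 1 / (2 * (exp (-F) + exp F + 2)) * (a - F) ^ 2
      ≤ condLogRisk p a - condLogRisk p F := by
  have := add_deriv_mul_add_sq_le_of_le_deriv2 (c := 1 / (exp (-F) + exp F + 2)) ha.2
    (fun t _ => hasDerivAt_condLogRisk p t) (fun t _ => hasDerivAt_condLogRiskDeriv p t)
    fun t ht => one_div_exp_neg_add_exp_add_two_le (abs_le_abs ht.2.le (by linarith [ht.1, ha.1]))
  rw [div_div, mul_comm _ (2 : ℝ)] at this
  linarith

def marginConst (η F : ℝ) : ℝ :=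
  (1 - η) / 2 * (-(1 / (1 + exp (-F)))) - (1 + η) / 2 * (-(1 / (1 + exp F)))

lemma marginConst_nonneg {η F : ℝ} (hη₀ : -1 < η) (hη₁ : η < 1)
    (hF : F ≤ log ((1 + η) / (1 - η))) : 0 ≤ marginConst η F := by
  have hexp : exp F * (1 - η) ≤ 1 + η := by
    rw [← le_div_iff₀ (by linarith), ← le_log_iff_exp_le (div_pos (by linarith) (by linarith))]
    exact hF
  have : marginConst η F = (1 + η - exp F * (1 - η)) / (2 * (1 + exp F)) := by
    rw [marginConst, exp_neg]
    field_simp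
    ring
  rw [this]
  exact div_nonneg (by linarith) (by positivity)

lemma neg_condLogRiskDeriv_eq (p η F : ℝ) :
    -condLogRiskDeriv p F = marginConst η F + (p - (1 + η) / 2) := by
  -- `1 / (1 + e^F) + 1 / (1 + e^{-F}) = 1`
  rw [condLogRiskDeriv, marginConst, exp_neg]
  field_simp
  ring

lemma abs_mul_marginConst_add_le_condLogRisk_sub {η F a p : ℝ} (ha : a ∈ Icc (-F) F)
    (hp : (1 + η) / 2 ≤ p) :
    |a - F| * marginConst η F + 1 / (2 * (exp (-F) + exp F + 2)) * (a - F) ^ 2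
      ≤ condLogRisk p a - condLogRisk p F := by
  have hFa : 0 ≤ F - a := sub_nonneg.2 ha.2
  rw [abs_sub_comm, abs_of_nonneg hFa]
  refine le_trans ?_ (le_condLogRisk_sub p ha)
  rw [neg_condLogRiskDeriv_eq p η F]
  nlinarith [mul_nonneg hFa (sub_nonneg.2 hp)]

/-- Lemma 5.7: pointwise bounds around `F₀ · sgn(2e - 1)`;
here `p` plays the role of the conditional probability value `e`. -/
theorem statement11 (η₀ F₀ a p : ℝ) (hη₀ : η₀ ∈ Set.Ioo (0 : ℝ) 1)
    (hF₀ : F₀ ∈ Set.Ioo (0 : ℝ) (Real.log ((1 + η₀) / (1 - η₀))))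
    (ha : a ∈ Set.Icc (-F₀) F₀) (hp : p ∈ Set.Icc (0 : ℝ) 1) (hpη : η₀ < |2 * p - 1|)
    (s : ℝ) (hs : s = if 0 < 2 * p - 1 then 1 else -1)
    (Dq : ℝ)
    (hD : Dq = (1 - η₀) / 2 * (-(1 / (1 + Real.exp (-F₀))))
        - (1 + η₀) / 2 * (-(1 / (1 + Real.exp F₀)))) :
    0 ≤ |a - F₀ * s| * Dq ∧
    |a - F₀ * s| * Dq
      ≤ |a - F₀ * s| * Dq
          + 1 / (2 * (Real.exp (-F₀) + Real.exp F₀ + 2)) * (a - F₀ * s) ^ 2 ∧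
    |a - F₀ * s| * Dq + 1 / (2 * (Real.exp (-F₀) + Real.exp F₀ + 2)) * (a - F₀ * s) ^ 2
      ≤ p * (logLoss a - logLoss (F₀ * s)) + (1 - p) * (logLoss (-a) - logLoss (-(F₀ * s))) ∧
    p * (logLoss a - logLoss (F₀ * s)) + (1 - p) * (logLoss (-a) - logLoss (-(F₀ * s)))
      ≤ |a - F₀ * s| + F₀ ^ 2 := by
  change Dq = marginConst η₀ F₀ at hD
  have hDq : 0 ≤ Dq := hD ▸ marginConst_nonneg (by linarith [hη₀.1]) hη₀.2 hF₀.2.le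
  have hlower : |a - F₀ * s| * Dq + 1 / (2 * (exp (-F₀) + exp F₀ + 2)) * (a - F₀ * s) ^ 2
      ≤ condLogRisk p a - condLogRisk p (F₀ * s) := by
    rw [hD]
    rcases lt_or_gt_of_ne (abs_pos.1 (hη₀.1.trans hpη)) with hneg | hpos
    · have hb : -a ∈ Icc (-F₀) F₀ := ⟨by linarith [ha.2], by linarith [ha.1]⟩
      have := abs_mul_marginConst_add_le_condLogRisk_sub (η := η₀) (p := 1 - p) hb
        (by rw [abs_of_neg hneg] at hpη; linarith)
      rw [condLogRisk_one_sub_neg, ← neg_neg F₀, condLogRisk_one_sub_neg, neg_neg] at this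
      rwa [hs, if_neg hneg.not_gt, mul_neg_one, show a - -F₀ = -(-a - F₀) by ring, abs_neg,
        neg_sq]
    · have := abs_mul_marginConst_add_le_condLogRisk_sub (η := η₀) (p := p) ha
        (by rw [abs_of_pos hpos] at hpη; linarith)
      rwa [hs, if_pos hpos, mul_one]
  have hE : p * (logLoss a - logLoss (F₀ * s)) + (1 - p) * (logLoss (-a) - logLoss (-(F₀ * s)))
      = condLogRisk p a - condLogRisk p (F₀ * s) := by
    rw [condLogRisk, condLogRisk]
    ring
  rw [hE]
  exact ⟨mul_nonneg (abs_nonneg _) hDq, le_add_of_nonneg_right (by positivity), hlower,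
    (condLogRisk_sub_le hp _ _).trans (le_add_of_nonneg_right (sq_nonneg F₀))⟩

end

end DNNLogistic
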